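/- Let J := ⋃_{j=1}^d (a_j, b_j) with d ≥ 1 be a finite union of bounded open intervals with disjoint closures, and let c : J → ℝ be bounded. Let u : ℝ → ℝ be bounded and continuous, with u ≥ 0 on ℝ∖J, such that for every x ∈ J the principal-value limit defining (−Δ)^{1/2}u(x) exists and satisfies (−Δ)^{1/2}u(x) − c(x)·u(x) ≥ 0. Suppose there exists a bounded continuous z : ℝ → ℝ with z > 0 on cl J, z ≥ 0 on ℝ∖J, and such that for every x ∈ J the principal-value limit defining (−Δ)^{1/2}z(x) exists and satisfies (−Δ)^{1/2}z(x) − c(x)·z(x) ≥ 0. Then u ≥ 0 on ℝ, and moreover either u > 0 everywhere in J or u is identically 0 on ℝ. -/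

import Mathlib

open MeasureTheory Filter Set

/-- The truncated integral appearing in the principal-value definition of the
half-Laplacian: `(1/π) ∫_{|z| ≥ δ} (u(x) - u(x+z))/z² dz`. -/
noncomputable def pvHalfLap (u : ℝ → ℝ) (x δ : ℝ) : ℝ :=
  (1 / Real.pi) * ∫ z in {z : ℝ | δ ≤ |z|}, (u x - u (x + z)) / z ^ 2

/-- `HasHalfLapAt u x L` means that the principal-value limit defining
`(-Δ)^{1/2} u (x)` exists and equals `L`. -/
def HasHalfLapAt (u : ℝ → ℝ) (x L : ℝ) : Prop :=
  Tendsto (fun δ => pvHalfLap u x δ) (nhdsWithin 0 (Ioi 0)) (nhds L)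

/-!
At a global minimum `x₀` of `v` the truncated integrals defining `(-Δ)^{1/2} v (x₀)` are
nonpositive and decrease as `δ ↓ 0`, so a nonnegative principal value forces all of them to
vanish, and then `v` is constant. Minimising `u / z` over the compact set `closure J` gives the
largest `m` with `m z ≤ u` on `closure J`; if `m < 0`, the minimum is attained in `J`, and
`u - m z` is a nonnegative supersolution vanishing there, hence `u = m z < 0` on
`closure J \ J`, where `u ≥ 0`. The same rigidity at a zero of `u ≥ 0` in `J` gives the
dichotomy.
-/

lemma measurableSet_le_abs (δ : ℝ) : MeasurableSet {ζ : ℝ | δ ≤ |ζ|} :=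
  measurableSet_le measurable_const measurable_abs

lemma one_div_sq_le_of_le_abs {δ ζ : ℝ} (hδ : 0 < δ) (hζ : δ ≤ |ζ|) :
    1 / ζ ^ 2 ≤ (1 + (δ ^ 2)⁻¹) * (1 + ζ ^ 2)⁻¹ := by
  have hδζ : δ ^ 2 ≤ ζ ^ 2 := by simpa only [sq_abs] using pow_le_pow_left₀ hδ.le hζ 2
  have hζ2 : 0 < ζ ^ 2 := (pow_pos hδ 2).trans_le hδζ
  rw [div_le_iff₀ hζ2]
  field_simp
  nlinarith

lemma integrableOn_halfLap_integrand {w : ℝ → ℝ} {M : ℝ} (hwM : ∀ y, |w y| ≤ M)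
    (hwm : Measurable w) (x : ℝ) {δ : ℝ} (hδ : 0 < δ) :
    IntegrableOn (fun ζ => (w x - w (x + ζ)) / ζ ^ 2) {ζ : ℝ | δ ≤ |ζ|} := by
  refine Integrable.mono'
    (integrable_inv_one_add_sq.const_mul (2 * M * (1 + (δ ^ 2)⁻¹))).integrableOn
    ((hwm.const_sub _ |>.comp (measurable_const_add x)).div (measurable_id.pow_const 2)
      |>.aestronglyMeasurable) ?_
  refine (ae_restrict_iff' (measurableSet_le_abs δ)).2 (Eventually.of_forall fun ζ hζ => ?_)
  have hdiff : |w x - w (x + ζ)| ≤ 2 * M := by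
    linarith [abs_sub (w x) (w (x + ζ)), hwM x, hwM (x + ζ)]
  calc ‖(w x - w (x + ζ)) / ζ ^ 2‖ = |w x - w (x + ζ)| * (1 / ζ ^ 2) := by
        rw [Real.norm_eq_abs, abs_div, abs_of_nonneg (sq_nonneg ζ), mul_one_div]
    _ ≤ 2 * M * ((1 + (δ ^ 2)⁻¹) * (1 + ζ ^ 2)⁻¹) :=
        mul_le_mul hdiff (one_div_sq_le_of_le_abs hδ hζ) (by positivity)
          ((abs_nonneg _).trans hdiff)
    _ = 2 * M * (1 + (δ ^ 2)⁻¹) * (1 + ζ ^ 2)⁻¹ := by ring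

lemma pvHalfLap_sub_const_mul {u z : ℝ → ℝ} {Mu Mz : ℝ} (huM : ∀ y, |u y| ≤ Mu)
    (hum : Measurable u) (hzM : ∀ y, |z y| ≤ Mz) (hzm : Measurable z) (m x : ℝ) {δ : ℝ}
    (hδ : 0 < δ) :
    pvHalfLap (fun y => u y - m * z y) x δ = pvHalfLap u x δ - m * pvHalfLap z x δ := by
  have hsplit : ∀ ζ : ℝ, (u x - m * z x - (u (x + ζ) - m * z (x + ζ))) / ζ ^ 2
      = (u x - u (x + ζ)) / ζ ^ 2 - m * ((z x - z (x + ζ)) / ζ ^ 2) := fun ζ => by ring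
  simp only [pvHalfLap, hsplit]
  rw [integral_sub (integrableOn_halfLap_integrand huM hum x hδ)
    ((integrableOn_halfLap_integrand hzM hzm x hδ).const_mul m), integral_const_mul]
  ring

lemma HasHalfLapAt.sub_const_mul {u z : ℝ → ℝ} {Mu Mz x Lu Lz : ℝ}
    (hu : HasHalfLapAt u x Lu) (hz : HasHalfLapAt z x Lz) (huM : ∀ y, |u y| ≤ Mu)
    (hum : Measurable u) (hzM : ∀ y, |z y| ≤ Mz) (hzm : Measurable z) (m : ℝ) :
    HasHalfLapAt (fun y => u y - m * z y) x (Lu - m * Lz) := by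
  refine (hu.sub (hz.const_mul m)).congr' ?_
  filter_upwards [self_mem_nhdsWithin] with δ hδ
  exact (pvHalfLap_sub_const_mul huM hum hzM hzm m x hδ).symm

section MinimumPoint

variable {v : ℝ → ℝ} {x₀ : ℝ}

lemma halfLap_integrand_nonpos (hmin : ∀ y, v x₀ ≤ v y) (ζ : ℝ) :
    (v x₀ - v (x₀ + ζ)) / ζ ^ 2 ≤ 0 :=
  div_nonpos_of_nonpos_of_nonneg (sub_nonpos.2 (hmin _)) (sq_nonneg ζ)

lemma pvHalfLap_nonpos_of_forall_le (hmin : ∀ y, v x₀ ≤ v y) (δ : ℝ) :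
    pvHalfLap v x₀ δ ≤ 0 :=
  mul_nonpos_of_nonneg_of_nonpos (by positivity)
    (setIntegral_nonpos (measurableSet_le_abs δ) fun ζ _ => halfLap_integrand_nonpos hmin ζ)

lemma pvHalfLap_mono_of_forall_le {M : ℝ} (hvM : ∀ y, |v y| ≤ M) (hvm : Measurable v)
    (hmin : ∀ y, v x₀ ≤ v y) {δ δ' : ℝ} (hδ' : 0 < δ') (hδδ' : δ' ≤ δ) :
    pvHalfLap v x₀ δ' ≤ pvHalfLap v x₀ δ := by
  have hint := (integrableOn_halfLap_integrand hvM hvm x₀ hδ').neg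
  have hsub : {ζ : ℝ | δ ≤ |ζ|} ⊆ {ζ : ℝ | δ' ≤ |ζ|} := fun ζ hζ => hδδ'.trans hζ
  have := setIntegral_mono_set hint
    (Eventually.of_forall fun ζ => neg_nonneg.2 (halfLap_integrand_nonpos hmin ζ))
    hsub.eventuallyLE
  simp only [Pi.neg_apply, integral_neg, neg_le_neg_iff] at this
  exact mul_le_mul_of_nonneg_left this (by positivity)

lemma pvHalfLap_eq_zero_of_forall_le {M L : ℝ} (hvM : ∀ y, |v y| ≤ M) (hvm : Measurable v)
    (hmin : ∀ y, v x₀ ≤ v y) (hL : HasHalfLapAt v x₀ L) (hL0 : 0 ≤ L) {δ : ℝ} (hδ : 0 < δ) :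
    pvHalfLap v x₀ δ = 0 := by
  refine le_antisymm (pvHalfLap_nonpos_of_forall_le hmin δ) (hL0.trans ?_)
  refine le_of_tendsto hL ?_
  filter_upwards [Ioo_mem_nhdsGT hδ] with δ' hδ'
  exact pvHalfLap_mono_of_forall_le hvM hvm hmin hδ'.1 hδ'.2.le

lemma eq_of_pvHalfLap_eq_zero {M : ℝ} (hvM : ∀ y, |v y| ≤ M) (hvc : Continuous v)
    (hmin : ∀ y, v x₀ ≤ v y) {δ : ℝ} (hδ : 0 < δ) (h0 : pvHalfLap v x₀ δ = 0) {ζ : ℝ}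
    (hζ : δ < |ζ|) : v (x₀ + ζ) = v x₀ := by
  set g : ℝ → ℝ := fun ζ => (v x₀ - v (x₀ + ζ)) / ζ ^ 2
  have hg : ∫ ζ in {ζ : ℝ | δ ≤ |ζ|}, -g ζ = 0 := by
    rw [integral_neg, neg_eq_zero]
    simpa [pvHalfLap, Real.pi_ne_zero] using h0
  have hae := (setIntegral_eq_zero_iff_of_nonneg_ae
    (Eventually.of_forall fun ζ => neg_nonneg.2 (halfLap_integrand_nonpos hmin ζ))
    (integrableOn_halfLap_integrand hvM hvc.measurable x₀ hδ).neg).1 hg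
  have hU : IsOpen {ζ : ℝ | δ < |ζ|} := isOpen_lt continuous_const continuous_abs
  have hgU : ContinuousOn (fun ζ => -g ζ) {ζ : ℝ | δ < |ζ|} := by
    refine (ContinuousOn.div (by fun_prop) (by fun_prop) fun ζ hζ => ?_).neg
    exact pow_ne_zero 2 (abs_pos.1 (hδ.trans hζ))
  have := Measure.eqOn_open_of_ae_eq
    (ae_restrict_of_ae_restrict_of_subset (fun ζ (hζ : δ < |ζ|) => hζ.le) hae) hU hgU
    continuousOn_const hζ
  have hζ0 : ζ ≠ 0 := abs_pos.1 (hδ.trans hζ)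
  simp only [Pi.zero_apply, neg_eq_zero, div_eq_zero_iff, pow_eq_zero_iff two_ne_zero,
    hζ0, or_false, sub_eq_zero] at this
  exact this.symm

theorem eq_of_forall_le_of_hasHalfLapAt_nonneg {M L : ℝ} (hvM : ∀ y, |v y| ≤ M)
    (hvc : Continuous v) (hmin : ∀ y, v x₀ ≤ v y) (hL : HasHalfLapAt v x₀ L) (hL0 : 0 ≤ L)
    (y : ℝ) : v y = v x₀ := by
  rcases eq_or_ne y x₀ with rfl | hy
  · rfl
  have hpos : 0 < |y - x₀| := abs_pos.2 (sub_ne_zero.2 hy)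
  have h0 := pvHalfLap_eq_zero_of_forall_le hvM hvc.measurable hmin hL hL0 (half_pos hpos)
  simpa using eq_of_pvHalfLap_eq_zero hvM hvc hmin (half_pos hpos) h0 (half_lt_self hpos)

end MinimumPoint

theorem eq_const_mul_of_const_mul_le {u z : ℝ → ℝ} {Mu Mz m c x₀ Lu Lz : ℝ}
    (huM : ∀ y, |u y| ≤ Mu) (huc : Continuous u) (hzM : ∀ y, |z y| ≤ Mz) (hzc : Continuous z)
    (hle : ∀ y, m * z y ≤ u y) (heq : u x₀ = m * z x₀) (hm : m ≤ 0)
    (hLu : HasHalfLapAt u x₀ Lu) (hu : 0 ≤ Lu - c * u x₀)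
    (hLz : HasHalfLapAt z x₀ Lz) (hz : 0 ≤ Lz - c * z x₀) (y : ℝ) : u y = m * z y := by
  set v : ℝ → ℝ := fun y => u y - m * z y
  have hvM : ∀ y, |v y| ≤ Mu + |m| * Mz := fun y =>
    calc |u y - m * z y| ≤ |u y| + |m| * |z y| := by rw [← abs_mul]; exact abs_sub _ _
      _ ≤ Mu + |m| * Mz := add_le_add (huM y) (mul_le_mul_of_nonneg_left (hzM y) (abs_nonneg m))
  have hL : HasHalfLapAt v x₀ (Lu - m * Lz) :=
    hLu.sub_const_mul hLz huM huc.measurable hzM hzc.measurable m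
  have hL0 : 0 ≤ Lu - m * Lz := by
    rw [heq] at hu
    linarith [mul_nonneg (neg_nonneg.2 hm) hz]
  have hmin : ∀ y, v x₀ ≤ v y := fun y => by simp only [v, heq, sub_self, sub_nonneg, hle y]
  have hv := eq_of_forall_le_of_hasHalfLapAt_nonneg hvM (huc.sub (continuous_const.mul hzc)) hmin
    hL hL0 y
  simpa only [v, heq, sub_self, sub_eq_zero] using hv

lemma exists_mem_closure_notMem {E : Type*} [NormedAddCommGroup E] [NormedSpace ℝ E]
    [Nontrivial E] {J : Set E} (hJo : IsOpen J) (hJb : Bornology.IsBounded J)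
    (hne : J.Nonempty) : ∃ p ∈ closure J, p ∉ J := by
  obtain ⟨p, hp⟩ := nonempty_frontier_iff.2 ⟨hne, fun h => NormedSpace.unbounded_univ ℝ E (h ▸ hJb)⟩
  rw [hJo.frontier_eq] at hp
  exact ⟨p, hp⟩

theorem nonneg_of_supersolution {J : Set ℝ} (hJo : IsOpen J) (hJb : Bornology.IsBounded J)
    {c u z : ℝ → ℝ} {Mu Mz : ℝ} (huM : ∀ x, |u x| ≤ Mu) (huc : Continuous u)
    (hu_out : ∀ x ∉ J, 0 ≤ u x)
    (hu_super : ∀ x ∈ J, ∃ L : ℝ, HasHalfLapAt u x L ∧ 0 ≤ L - c x * u x)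
    (hzM : ∀ x, |z x| ≤ Mz) (hzc : Continuous z) (hz_pos : ∀ x ∈ closure J, 0 < z x)
    (hz_out : ∀ x ∉ J, 0 ≤ z x)
    (hz_super : ∀ x ∈ J, ∃ L : ℝ, HasHalfLapAt z x L ∧ 0 ≤ L - c x * z x) (x : ℝ) :
    0 ≤ u x := by
  by_contra! hx
  have hxJ : x ∈ J := by_contra fun h => hx.not_ge (hu_out x h)
  obtain ⟨x₀, hx₀K, hmin⟩ := hJb.isCompact_closure.exists_isMinOn ⟨x, subset_closure hxJ⟩
    (huc.continuousOn.div hzc.continuousOn fun y hy => (hz_pos y hy).ne')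
  set m := u x₀ / z x₀
  have hm : m < 0 := (hmin (subset_closure hxJ)).trans_lt
    (div_neg_of_neg_of_pos hx (hz_pos x (subset_closure hxJ)))
  have hx₀J : x₀ ∈ J := by_contra fun h =>
    hm.not_ge (div_nonneg (hu_out x₀ h) (hz_pos x₀ hx₀K).le)
  have hle : ∀ y, m * z y ≤ u y := by
    intro y
    by_cases hy : y ∈ J
    · exact (le_div_iff₀ (hz_pos y (subset_closure hy))).1 (hmin (subset_closure hy))
    · nlinarith [hu_out y hy, hz_out y hy]
  have heq : u x₀ = m * z x₀ := (div_mul_cancel₀ _ (hz_pos x₀ hx₀K).ne').symm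
  obtain ⟨Lu, hLu, hu⟩ := hu_super x₀ hx₀J
  obtain ⟨Lz, hLz, hz⟩ := hz_super x₀ hx₀J
  have hu_eq := eq_const_mul_of_const_mul_le huM huc hzM hzc hle heq hm.le hLu hu hLz hz
  obtain ⟨p, hpK, hpJ⟩ := exists_mem_closure_notMem hJo hJb ⟨x, hxJ⟩
  have hup := hu_out p hpJ
  rw [hu_eq p] at hup
  exact (mul_neg_of_neg_of_pos hm (hz_pos p hpK)).not_ge hup

theorem pos_or_eq_zero_of_nonneg_supersolution {J : Set ℝ} {c u : ℝ → ℝ} {M : ℝ}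
    (huM : ∀ x, |u x| ≤ M) (huc : Continuous u) (hu_nonneg : ∀ x, 0 ≤ u x)
    (hu_super : ∀ x ∈ J, ∃ L : ℝ, HasHalfLapAt u x L ∧ 0 ≤ L - c x * u x) :
    (∀ x ∈ J, 0 < u x) ∨ ∀ x, u x = 0 := by
  refine or_iff_not_imp_left.2 fun h => ?_
  obtain ⟨x₁, hx₁J, hx₁⟩ : ∃ x ∈ J, u x ≤ 0 := by simpa using h
  have hu₁ : u x₁ = 0 := le_antisymm hx₁ (hu_nonneg x₁)
  obtain ⟨L, hL, hL0⟩ := hu_super x₁ hx₁J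
  rw [hu₁, mul_zero, sub_zero] at hL0
  intro x
  rw [← hu₁]
  exact eq_of_forall_le_of_hasHalfLapAt_nonneg huM huc (fun y => hu₁ ▸ hu_nonneg y) hL hL0 x

theorem strong_maximum_principle_general
    (d : ℕ) (a b : Fin d → ℝ)
    (J : Set ℝ) (hJ : J = ⋃ k, Ioo (a k) (b k))
    (c : ℝ → ℝ)
    (u : ℝ → ℝ) (hu_bdd : ∃ M : ℝ, ∀ x, |u x| ≤ M) (hu_cont : Continuous u)
    (hu_out : ∀ x ∉ J, 0 ≤ u x)
    (hu_super : ∀ x ∈ J, ∃ L : ℝ, HasHalfLapAt u x L ∧ 0 ≤ L - c x * u x)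
    (z : ℝ → ℝ) (hz_bdd : ∃ M : ℝ, ∀ x, |z x| ≤ M) (hz_cont : Continuous z)
    (hz_pos : ∀ x ∈ closure J, 0 < z x) (hz_out : ∀ x ∉ J, 0 ≤ z x)
    (hz_super : ∀ x ∈ J, ∃ L : ℝ, HasHalfLapAt z x L ∧ 0 ≤ L - c x * z x) :
    (∀ x, 0 ≤ u x) ∧ ((∀ x ∈ J, 0 < u x) ∨ ∀ x, u x = 0) := by
  obtain ⟨Mu, hMu⟩ := hu_bdd
  obtain ⟨Mz, hMz⟩ := hz_bdd
  have hJo : IsOpen J := hJ ▸ isOpen_iUnion fun k => isOpen_Ioo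
  have hJb : Bornology.IsBounded J :=
    hJ ▸ Bornology.isBounded_iUnion.2 fun k => Metric.isBounded_Ioo _ _
  have hu_nonneg : ∀ x, 0 ≤ u x := nonneg_of_supersolution hJo hJb hMu hu_cont hu_out hu_super
    hMz hz_cont hz_pos hz_out hz_super
  exact ⟨hu_nonneg, pos_or_eq_zero_of_nonneg_supersolution hMu hu_cont hu_nonneg hu_super⟩

/-- Strong maximum principle for `(-Δ)^{1/2} - c` in a finite union `J` of bounded open
intervals with disjoint closures, in the presence of a positive supersolution `z`. -/
theorem strong_maximum_principle
    (d : ℕ) (hd : 1 ≤ d) (a b : Fin d → ℝ)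
    (hab : ∀ k, a k < b k) (hord : ∀ k l : Fin d, k < l → b k < a l)
    (J : Set ℝ) (hJ : J = ⋃ k, Ioo (a k) (b k))
    (c : ℝ → ℝ) (hc : ∃ M : ℝ, ∀ x ∈ J, |c x| ≤ M)
    (u : ℝ → ℝ) (hu_bdd : ∃ M : ℝ, ∀ x, |u x| ≤ M) (hu_cont : Continuous u)
    (hu_out : ∀ x ∉ J, 0 ≤ u x)
    (hu_super : ∀ x ∈ J, ∃ L : ℝ, HasHalfLapAt u x L ∧ 0 ≤ L - c x * u x)
    (z : ℝ → ℝ) (hz_bdd : ∃ M : ℝ, ∀ x, |z x| ≤ M) (hz_cont : Continuous z)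
    (hz_pos : ∀ x ∈ closure J, 0 < z x) (hz_out : ∀ x ∉ J, 0 ≤ z x)
    (hz_super : ∀ x ∈ J, ∃ L : ℝ, HasHalfLapAt z x L ∧ 0 ≤ L - c x * z x) :
    (∀ x, 0 ≤ u x) ∧ ((∀ x ∈ J, 0 < u x) ∨ ∀ x, u x = 0) :=
  strong_maximum_principle_general d a b J hJ c u hu_bdd hu_cont hu_out hu_super z hz_bdd hz_cont
    hz_pos hz_out hz_super
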